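/- arXiv:2202.02854 — 2 statements merged into one kernel-verified Lean document; each statement's English description precedes it below -/
import Mathlib

section
/- Let p(z) = a + p₁z + p₂z² + o(z²) and φ(z) = a + b₁z + b₂z² + o(z²) be holomorphic functions on the open unit disk 𝔻 such that φ is subordinate to p (i.e., φ = p ∘ ω for some holomorphic ω : 𝔻 → 𝔻 with ω(0) = 0). Then for every μ ∈ ℂ, |b₂ − μb₁²| ≤ max(|p₁|, |p₂ − μp₁²|). -/
/-!
Write `φ = p ∘ ω` with `ω(z) = c₁ z + c₂ z² + ⋯`. Comparing coefficients gives `b₁ = p₁ c₁` and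
`b₂ = p₁ c₂ + p₂ c₁²`, hence `b₂ - μ b₁² = p₁ c₂ + (p₂ - μ p₁²) c₁²`. By the Schwarz lemma,
`ω(z)/z` maps the disk into the closed disk, and the Schwarz–Pick inequality applied to it at `0`
gives the classical bound `|c₂| ≤ 1 - |c₁|²`. So `|b₂ - μ b₁²|` is at most a convex combination of
`|p₁|` and `|p₂ - μ p₁²|`.
-/

open Metric Complex Set Filter ComplexConjugate Topology

theorem deriv_dslope_self_eq_iteratedDeriv_two_div_two {𝕜 : Type*} [NontriviallyNormedField 𝕜]
    [CompleteSpace 𝕜] [CharZero 𝕜] {f : 𝕜 → 𝕜} {c : 𝕜}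
    (hf : AnalyticAt 𝕜 f c) : deriv (dslope f c) c = iteratedDeriv 2 f c / 2 := by
  obtain ⟨q, hq⟩ := hf
  have hcoeff : iteratedDeriv 2 f c = 2 * q.coeff 2 := by
    obtain ⟨r, hr⟩ := hq
    simpa [iteratedDeriv_eq_iteratedFDeriv] using (hr.factorial_smul 1 2).symm
  calc deriv (dslope f c) c = q.fslope.coeff 1 := hq.has_fpower_series_dslope_fslope.deriv
    _ = q.coeff 2 := q.coeff_fslope
    _ = iteratedDeriv 2 f c / 2 := by rw [hcoeff]; field_simp

section Mobius

variable {c w : ℂ}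

theorem normSq_one_sub_conj_mul_sub_normSq_sub (c w : ℂ) :
    normSq (1 - conj c * w) - normSq (w - c) = (1 - normSq c) * (1 - normSq w) := by
  simp only [normSq_apply, sub_re, sub_im, mul_re, mul_im, one_re, one_im, conj_re, conj_im]
  ring

theorem one_sub_conj_mul_ne_zero (hc : ‖c‖ < 1) (hw : ‖w‖ ≤ 1) : 1 - conj c * w ≠ 0 := by
  have hlt : ‖conj c * w‖ < 1 := by
    rw [norm_mul, norm_conj]
    nlinarith [norm_nonneg c, norm_nonneg w]
  intro h
  rw [← sub_eq_zero.mp h, norm_one] at hlt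
  exact hlt.false

theorem norm_sub_div_one_sub_conj_mul_le_one (hc : ‖c‖ < 1) (hw : ‖w‖ ≤ 1) :
    ‖(w - c) / (1 - conj c * w)‖ ≤ 1 := by
  rw [norm_div, div_le_one (norm_pos_iff.mpr (one_sub_conj_mul_ne_zero hc hw)),
    ← sq_le_sq₀ (norm_nonneg _) (norm_nonneg _), ← normSq_eq_norm_sq, ← normSq_eq_norm_sq,
    ← sub_nonneg, normSq_one_sub_conj_mul_sub_normSq_sub, normSq_eq_norm_sq, normSq_eq_norm_sq]
  apply mul_nonneg <;> nlinarith [norm_nonneg c, norm_nonneg w]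

theorem hasDerivAt_sub_div_one_sub_conj_mul (hc : ‖c‖ < 1) :
    HasDerivAt (fun w => (w - c) / (1 - conj c * w)) (1 - ‖c‖ ^ 2 : ℂ)⁻¹ c := by
  have hden := one_sub_conj_mul_ne_zero hc hc.le
  refine (((hasDerivAt_id c).sub_const c).div
    (((hasDerivAt_id c).const_mul (conj c)).const_sub 1) hden).congr_deriv ?_
  simp only [id, mul_one, one_mul, mul_neg, sub_neg_eq_add]
  rw [mul_comm (conj c), mul_conj'] at *
  field_simp
  ring

theorem differentiableAt_sub_div_one_sub_conj_mul (hc : ‖c‖ < 1) (hw : ‖w‖ ≤ 1) :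
    DifferentiableAt ℂ (fun w => (w - c) / (1 - conj c * w)) w := by
  have := one_sub_conj_mul_ne_zero hc hw
  fun_prop (disch := assumption)

end Mobius

theorem norm_deriv_le_one_sub_sq_of_mapsTo_closedBall {g : ℂ → ℂ}
    (hg : DifferentiableOn ℂ g (ball 0 1)) (hmaps : MapsTo g (ball 0 1) (closedBall 0 1)) :
    ‖deriv g 0‖ ≤ 1 - ‖g 0‖ ^ 2 := by
  have h0 : (0 : ℂ) ∈ ball (0 : ℂ) 1 := mem_ball_self one_pos
  have hg_le : ∀ z ∈ ball (0 : ℂ) 1, ‖g z‖ ≤ 1 := fun z hz => by simpa using hmaps hz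
  set c := g 0
  rcases (hg_le 0 h0).lt_or_eq with hc | hc
  · -- `m` is the disk automorphism sending `c` to `0`; the Schwarz lemma applies to `m ∘ g`.
    set m : ℂ → ℂ := fun w => (w - c) / (1 - conj c * w)
    have hmg_diff : DifferentiableOn ℂ (m ∘ g) (ball 0 1) := fun z hz =>
      ((differentiableAt_sub_div_one_sub_conj_mul hc (hg_le z hz)).comp z
        (hg.differentiableAt (isOpen_ball.mem_nhds hz))).differentiableWithinAt
    have hmg_maps : MapsTo (m ∘ g) (ball 0 1) (closedBall ((m ∘ g) 0) 1) := fun z hz => by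
      simpa [m, c] using norm_sub_div_one_sub_conj_mul_le_one hc (hg_le z hz)
    have hderiv : deriv (m ∘ g) 0 = (1 - ‖c‖ ^ 2 : ℂ)⁻¹ * deriv g 0 :=
      ((hasDerivAt_sub_div_one_sub_conj_mul hc).comp 0
        (hg.differentiableAt (isOpen_ball.mem_nhds h0)).hasDerivAt).deriv
    have hpos : 0 < 1 - ‖c‖ ^ 2 := by nlinarith [norm_nonneg c]
    have := norm_deriv_le_one_of_mapsTo_ball hmg_diff hmg_maps one_pos
    rwa [hderiv, norm_mul, norm_inv, ← ofReal_one, ← ofReal_pow, ← ofReal_sub, norm_real,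
      Real.norm_of_nonneg hpos.le, inv_mul_le_iff₀ hpos, mul_one] at this
  · have hmax : IsMaxOn (norm ∘ g) (ball 0 1) 0 := fun z hz => by
      simpa [← hc] using hg_le z hz
    have hconst : g =ᶠ[𝓝 0] fun _ => c :=
      eventuallyEq_of_mem (isOpen_ball.mem_nhds h0) <|
        eqOn_of_isPreconnected_of_isMaxOn_norm (convex_ball 0 1).isPreconnected isOpen_ball hg h0
          hmax
    rw [hconst.deriv_eq, deriv_const, norm_zero, hc]
    norm_num

theorem norm_iteratedDeriv_two_div_two_le_one_sub_sq {ω : ℂ → ℂ}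
    (hω : DifferentiableOn ℂ ω (ball 0 1)) (hω0 : ω 0 = 0)
    (hmaps : MapsTo ω (ball 0 1) (closedBall 0 1)) :
    ‖iteratedDeriv 2 ω 0 / 2‖ ≤ 1 - ‖deriv ω 0‖ ^ 2 := by
  have h0 : ball (0 : ℂ) 1 ∈ 𝓝 0 := isOpen_ball.mem_nhds (mem_ball_self one_pos)
  rw [← deriv_dslope_self_eq_iteratedDeriv_two_div_two (hω.analyticAt h0), ← dslope_same ω 0]
  refine norm_deriv_le_one_sub_sq_of_mapsTo_closedBall ((differentiableOn_dslope h0).mpr hω) ?_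
  intro z hz
  simpa using norm_dslope_le_div_of_mapsTo_ball hω (by rwa [hω0]) hz

theorem norm_mul_add_mul_sq_le_max {R : Type*} [SeminormedRing R] {a b c₁ c₂ : R}
    (hc : ‖c₂‖ ≤ 1 - ‖c₁‖ ^ 2) : ‖a * c₂ + b * c₁ ^ 2‖ ≤ max ‖a‖ ‖b‖ := by
  have hc₁ : ‖c₁ ^ 2‖ ≤ ‖c₁‖ ^ 2 := norm_pow_le' c₁ two_pos
  calc ‖a * c₂ + b * c₁ ^ 2‖ ≤ ‖a‖ * ‖c₂‖ + ‖b‖ * ‖c₁‖ ^ 2 :=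
        (norm_add_le _ _).trans <| add_le_add (norm_mul_le _ _) <|
          (norm_mul_le _ _).trans (mul_le_mul_of_nonneg_left hc₁ (norm_nonneg _))
    _ ≤ max ‖a‖ ‖b‖ * (1 - ‖c₁‖ ^ 2) + max ‖a‖ ‖b‖ * ‖c₁‖ ^ 2 := by
        gcongr
        · exact le_max_left _ _
        · exact le_max_right _ _
    _ = max ‖a‖ ‖b‖ := by ring

theorem fekete_szego_subordination_general
    (p φ ω : ℂ → ℂ)
    (hp : DifferentiableOn ℂ p (ball 0 1))
    (hω : DifferentiableOn ℂ ω (ball 0 1))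
    (hω0 : ω 0 = 0)
    (hωmaps : Set.MapsTo ω (ball 0 1) (ball 0 1))
    (hsub : ∀ z ∈ ball (0 : ℂ) 1, φ z = p (ω z))
    (p₁ p₂ b₁ b₂ : ℂ)
    (hp₁ : p₁ = deriv p 0) (hp₂ : p₂ = iteratedDeriv 2 p 0 / 2)
    (hb₁ : b₁ = deriv φ 0) (hb₂ : b₂ = iteratedDeriv 2 φ 0 / 2)
    (μ : ℂ) :
    ‖b₂ - μ * b₁ ^ 2‖ ≤
      max ‖p₁‖ ‖p₂ - μ * p₁ ^ 2‖ := by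
  have h0 : ball (0 : ℂ) 1 ∈ 𝓝 0 := isOpen_ball.mem_nhds (mem_ball_self one_pos)
  have hp_an : AnalyticAt ℂ p (ω 0) := by rw [hω0]; exact hp.analyticAt h0
  have hω_an : AnalyticAt ℂ ω 0 := hω.analyticAt h0
  have hφ : φ =ᶠ[𝓝 0] p ∘ ω := eventuallyEq_of_mem h0 hsub
  have hb₁_eq : b₁ = p₁ * deriv ω 0 := by
    rw [hb₁, hφ.deriv_eq, deriv_comp 0 hp_an.differentiableAt hω_an.differentiableAt, hω0, hp₁]
  have hb₂_eq : b₂ = p₂ * deriv ω 0 ^ 2 + p₁ * (iteratedDeriv 2 ω 0 / 2) := by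
    rw [hb₂, hφ.iteratedDeriv_eq, iteratedDeriv_comp_two hp_an.contDiffAt hω_an.contDiffAt, hω0,
      hp₁, hp₂]
    ring
  have hfs : b₂ - μ * b₁ ^ 2 =
      p₁ * (iteratedDeriv 2 ω 0 / 2) + (p₂ - μ * p₁ ^ 2) * deriv ω 0 ^ 2 := by
    rw [hb₁_eq, hb₂_eq]
    ring
  rw [hfs]
  exact norm_mul_add_mul_sq_le_max <|
    norm_iteratedDeriv_two_div_two_le_one_sub_sq hω hω0 (hωmaps.mono_right ball_subset_closedBall)

/-- Fekete–Szegő-type coefficient inequality for subordinate functions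
(Lemma 3.1 of the paper). -/
theorem fekete_szego_subordination
    (p φ ω : ℂ → ℂ)
    (hp : DifferentiableOn ℂ p (ball 0 1))
    (hφ : DifferentiableOn ℂ φ (ball 0 1))
    (hω : DifferentiableOn ℂ ω (ball 0 1))
    (hω0 : ω 0 = 0)
    (hωmaps : Set.MapsTo ω (ball 0 1) (ball 0 1))
    (hsub : ∀ z ∈ ball (0 : ℂ) 1, φ z = p (ω z))
    (p₁ p₂ b₁ b₂ : ℂ)
    (hp₁ : p₁ = deriv p 0) (hp₂ : p₂ = iteratedDeriv 2 p 0 / 2)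
    (hb₁ : b₁ = deriv φ 0) (hb₂ : b₂ = iteratedDeriv 2 φ 0 / 2)
    (μ : ℂ) :
    ‖b₂ - μ * b₁ ^ 2‖ ≤
      max ‖p₁‖ ‖p₂ - μ * p₁ ^ 2‖ :=
  fekete_szego_subordination_general p φ ω hp hω hω0 hωmaps hsub p₁ p₂ b₁ b₂ hp₁ hp₂ hb₁ hb₂ μ
end

section
/- Let g₃(z) := (1 − z)/(1 − (2α − 1)z) for α ∈ (0, 1), τ ∈ 𝔻 with g₃(τ) = ℓ for some ℓ in the image, and ĝ(t) = g₃((τ − t)/(1 − t·conj(τ))) = q₀ + q₁t + q₂t² + O(t³). Then |q₁| = 2(Re ℓ − α|ℓ|²) and q₂/q₁ computed via the formula q₁ = −g₃′(τ)(1 − |τ|²), q₂/q₁ = conj(τ) − (g₃″(τ)/(2g₃′(τ)))(1 − |τ|²); in particular |q₁|/2 = Re ℓ − α|ℓ|². -/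
open Metric Complex
open ComplexConjugate Topology

/-!
With `φ_τ t = (τ - t) / (1 - t τ̄)` one has `φ_τ 0 = τ`, `φ_τ' 0 = -(1 - |τ|²)` and
`φ_τ'' 0 = -2 τ̄ (1 - |τ|²)`, so the second-order chain rule for `g ∘ φ_τ` gives both formulas for
`q₁` and `q₂ / q₁`, for any `g` holomorphic at `τ` with `g' τ ≠ 0`. For `g₃` the derivative is
`2 (α - 1) / (1 - (2α - 1) τ)²`, so `|q₁| = 2 (1 - α)(1 - |τ|²) / |1 - (2α - 1) τ|²`, and a direct
computation with `ℓ = (1 - τ) / (1 - (2α - 1) τ)` shows that this equals `2 (Re ℓ - α |ℓ|²)`.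
-/

section LinearFraction

variable {𝕜 : Type*} [NontriviallyNormedField 𝕜] {p q r s z : 𝕜}

theorem hasDerivAt_linearFraction (h : r + s * z ≠ 0) :
    HasDerivAt (fun t => (p + q * t) / (r + s * t)) ((q * r - s * p) / (r + s * z) ^ 2) z := by
  have hnum : HasDerivAt (fun t => p + q * t) q z := by
    simpa using ((hasDerivAt_id z).const_mul q).const_add p
  have hden : HasDerivAt (fun t => r + s * t) s z := by
    simpa using ((hasDerivAt_id z).const_mul s).const_add r
  exact (hnum.fun_div hden h).congr_deriv (by ring)

theorem iteratedDeriv_two_linearFraction (h : r + s * z ≠ 0) :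
    iteratedDeriv 2 (fun t => (p + q * t) / (r + s * t)) z =
      -2 * s * (q * r - s * p) / (r + s * z) ^ 3 := by
  have hderiv : deriv (fun t => (p + q * t) / (r + s * t)) =ᶠ[𝓝 z]
      fun t => (q * r - s * p) / (r + s * t) ^ 2 := by
    filter_upwards [(show Continuous fun t => r + s * t by fun_prop).continuousAt.eventually_ne h]
      with t ht
    exact (hasDerivAt_linearFraction ht).deriv
  have hden : HasDerivAt (fun t => (r + s * t) ^ 2) (2 * (r + s * z) * s) z := by
    simpa using (((hasDerivAt_id z).const_mul s).const_add r).fun_pow 2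
  rw [iteratedDeriv_succ', iteratedDeriv_one, hderiv.deriv_eq,
    ((hasDerivAt_const z (q * r - s * p)).fun_div hden (pow_ne_zero 2 h)).deriv]
  field_simp
  ring

theorem analyticAt_linearFraction [CompleteSpace 𝕜] (h : r + s * z ≠ 0) :
    AnalyticAt 𝕜 (fun t => (p + q * t) / (r + s * t)) z := by
  fun_prop (disch := exact h)

end LinearFraction

section SecondOrderChainRule

variable {𝕜 : Type*} [NontriviallyNormedField 𝕜] [CompleteSpace 𝕜] {f g : 𝕜 → 𝕜} {x : 𝕜}

theorem iteratedDeriv_two_comp (hg : AnalyticAt 𝕜 g (f x)) (hf : AnalyticAt 𝕜 f x) :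
    iteratedDeriv 2 (g ∘ f) x =
      iteratedDeriv 2 g (f x) * deriv f x ^ 2 + deriv g (f x) * iteratedDeriv 2 f x := by
  have hderiv : deriv (g ∘ f) =ᶠ[𝓝 x] fun y => deriv g (f y) * deriv f y := by
    filter_upwards [hf.eventually_analyticAt,
      hf.continuousAt.tendsto.eventually hg.eventually_analyticAt] with y hfy hgy
    exact deriv_comp y hgy.differentiableAt hfy.differentiableAt
  have hg' := hg.deriv.differentiableAt.hasDerivAt.comp x hf.differentiableAt.hasDerivAt
  have hf' := hf.deriv.differentiableAt.hasDerivAt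
  simp only [iteratedDeriv_succ', iteratedDeriv_zero]
  rw [hderiv.deriv_eq]
  exact (hg'.fun_mul hf').deriv.trans (by simp only [Function.comp_apply]; ring)

end SecondOrderChainRule

noncomputable def diskInvolution (τ t : ℂ) : ℂ := (τ - t) / (1 - t * conj τ)

section DiskInvolution

variable {τ : ℂ} {g : ℂ → ℂ}

theorem diskInvolution_eq_linearFraction (τ : ℂ) :
    diskInvolution τ = fun t => (τ + -1 * t) / (1 + -conj τ * t) := by
  funext t
  simp only [diskInvolution]
  ring

theorem diskInvolution_zero (τ : ℂ) : diskInvolution τ 0 = τ := by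
  simp [diskInvolution]

theorem analyticAt_diskInvolution_zero (τ : ℂ) : AnalyticAt ℂ (diskInvolution τ) 0 := by
  rw [diskInvolution_eq_linearFraction]
  exact analyticAt_linearFraction (by simp)

theorem deriv_diskInvolution_zero (τ : ℂ) :
    deriv (diskInvolution τ) 0 = -(1 - (‖τ‖ : ℂ) ^ 2) := by
  rw [diskInvolution_eq_linearFraction, (hasDerivAt_linearFraction (by simp)).deriv,
    ← conj_mul']
  ring

theorem iteratedDeriv_two_diskInvolution_zero (τ : ℂ) :
    iteratedDeriv 2 (diskInvolution τ) 0 = -2 * conj τ * (1 - (‖τ‖ : ℂ) ^ 2) := by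
  rw [diskInvolution_eq_linearFraction, iteratedDeriv_two_linearFraction (by simp), ← conj_mul']
  ring

theorem deriv_comp_diskInvolution_zero (hg : AnalyticAt ℂ g τ) :
    deriv (g ∘ diskInvolution τ) 0 = -deriv g τ * (1 - (‖τ‖ : ℂ) ^ 2) := by
  rw [← diskInvolution_zero τ] at hg
  rw [deriv_comp 0 hg.differentiableAt (analyticAt_diskInvolution_zero τ).differentiableAt,
    deriv_diskInvolution_zero, diskInvolution_zero]
  ring

theorem iteratedDeriv_two_comp_diskInvolution_zero (hg : AnalyticAt ℂ g τ) :
    iteratedDeriv 2 (g ∘ diskInvolution τ) 0 =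
      iteratedDeriv 2 g τ * (1 - (‖τ‖ : ℂ) ^ 2) ^ 2
        - 2 * conj τ * deriv g τ * (1 - (‖τ‖ : ℂ) ^ 2) := by
  rw [← diskInvolution_zero τ] at hg
  rw [iteratedDeriv_two_comp hg (analyticAt_diskInvolution_zero τ),
    deriv_diskInvolution_zero, iteratedDeriv_two_diskInvolution_zero, diskInvolution_zero]
  ring

theorem iteratedDeriv_two_div_deriv_comp_diskInvolution_zero (hg : AnalyticAt ℂ g τ)
    (hg' : deriv g τ ≠ 0) (hτ : ‖τ‖ ≠ 1) :
    iteratedDeriv 2 (g ∘ diskInvolution τ) 0 / 2 / deriv (g ∘ diskInvolution τ) 0 =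
      conj τ - iteratedDeriv 2 g τ / (2 * deriv g τ) * (1 - (‖τ‖ : ℂ) ^ 2) := by
  have hτ' : 1 - (‖τ‖ : ℂ) ^ 2 ≠ 0 := by
    norm_cast
    rw [← ne_eq, sub_ne_zero, ne_comm, ne_eq, pow_eq_one_iff_of_nonneg (norm_nonneg τ) two_ne_zero]
    exact hτ
  rw [iteratedDeriv_two_comp_diskInvolution_zero hg, deriv_comp_diskInvolution_zero hg]
  field_simp
  ring

end DiskInvolution

theorem one_sub_mul_ne_zero_of_norm_le_one_of_norm_lt_one {a z : ℂ} (ha : ‖a‖ ≤ 1)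
    (hz : ‖z‖ < 1) : 1 - a * z ≠ 0 := by
  have h : ‖a * z‖ < 1 := by
    rw [norm_mul]
    nlinarith [norm_nonneg a, norm_nonneg z]
  intro h0
  rw [← sub_eq_zero.1 h0, norm_one] at h
  exact lt_irrefl 1 h

/-- Maps the unit disc onto the disc `{w | α * ‖w‖ ^ 2 < w.re}`, tangent to the imaginary axis
at `0`. -/
noncomputable def tangentDiskMap (α : ℝ) (z : ℂ) : ℂ := (1 - z) / (1 - (2 * (α : ℂ) - 1) * z)

section TangentDiskMap

variable {α : ℝ} {z : ℂ}

theorem tangentDiskMap_eq_linearFraction (α : ℝ) :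
    tangentDiskMap α = fun z => (1 + -1 * z) / (1 + -(2 * (α : ℂ) - 1) * z) := by
  funext z
  simp only [tangentDiskMap]
  ring

theorem analyticAt_tangentDiskMap (h : 1 - (2 * (α : ℂ) - 1) * z ≠ 0) :
    AnalyticAt ℂ (tangentDiskMap α) z := by
  rw [tangentDiskMap_eq_linearFraction]
  exact analyticAt_linearFraction (by rwa [neg_mul, ← sub_eq_add_neg])

theorem deriv_tangentDiskMap (h : 1 - (2 * (α : ℂ) - 1) * z ≠ 0) :
    deriv (tangentDiskMap α) z = 2 * (α - 1) / (1 - (2 * (α : ℂ) - 1) * z) ^ 2 := by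
  rw [tangentDiskMap_eq_linearFraction,
    (hasDerivAt_linearFraction (by rwa [neg_mul, ← sub_eq_add_neg])).deriv]
  ring

theorem re_sub_mul_norm_sq_tangentDiskMap (h : 1 - (2 * (α : ℂ) - 1) * z ≠ 0) :
    (tangentDiskMap α z).re - α * ‖tangentDiskMap α z‖ ^ 2 =
      (1 - α) * (1 - ‖z‖ ^ 2) / ‖1 - (2 * (α : ℂ) - 1) * z‖ ^ 2 := by
  have hc : 1 - (2 * (α : ℂ) - 1) * conj z ≠ 0 := by
    simpa [map_ofNat] using (map_ne_zero (starRingEnd ℂ)).2 h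
  apply ofReal_injective
  push_cast
  rw [re_eq_add_conj, ← mul_conj', ← mul_conj', ← mul_conj']
  simp only [tangentDiskMap, map_div₀, map_sub, map_one, map_mul, map_ofNat, conj_ofReal]
  -- `field_simp` rewrites this denominator with the factors commuted
  have h' : 1 - z * (2 * (α : ℂ) - 1) ≠ 0 := by rwa [mul_comm]
  field_simp
  ring

end TangentDiskMap

/-- Coefficient computation for g₃(z) = (1-z)/(1-(2α-1)z) underlying Corollary 4.5:
with ℓ = g₃(τ) one has |q₁| = 2(Re ℓ - α|ℓ|²), q₁ = -g₃'(τ)(1-|τ|²) and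
q₂/q₁ = conj τ - (g₃″(τ)/(2g₃'(τ)))(1-|τ|²). -/
theorem g3_coefficients
    (α : ℝ) (hα : α ∈ Set.Ioo (0 : ℝ) 1)
    (g₃ : ℂ → ℂ)
    (hg₃ : ∀ z : ℂ, g₃ z = (1 - z) / (1 - (2 * (α : ℂ) - 1) * z))
    (τ : ℂ) (hτ : τ ∈ ball (0 : ℂ) 1)
    (ℓ : ℂ) (hℓ : ℓ = g₃ τ)
    (gHat : ℂ → ℂ)
    (hgHat : ∀ t, gHat t = g₃ ((τ - t) / (1 - t * (starRingEnd ℂ) τ)))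
    (q₁ q₂ : ℂ)
    (hq₁ : q₁ = deriv gHat 0) (hq₂ : q₂ = iteratedDeriv 2 gHat 0 / 2) :
    ‖q₁‖ = 2 * (ℓ.re - α * ‖ℓ‖ ^ 2) ∧
    q₁ = -deriv g₃ τ * (1 - (‖τ‖ : ℂ) ^ 2) ∧
    q₂ / q₁ =
      (starRingEnd ℂ) τ -
        (iteratedDeriv 2 g₃ τ / (2 * deriv g₃ τ)) * (1 - (‖τ‖ : ℂ) ^ 2) := by
  obtain rfl : g₃ = tangentDiskMap α := funext hg₃
  obtain rfl : gHat = tangentDiskMap α ∘ diskInvolution τ := funext hgHat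
  subst hℓ hq₁ hq₂
  have hτ : ‖τ‖ < 1 := mem_ball_zero_iff.1 hτ
  have hden : 1 - (2 * (α : ℂ) - 1) * τ ≠ 0 := by
    refine one_sub_mul_ne_zero_of_norm_le_one_of_norm_lt_one ?_ hτ
    rw [show 2 * (α : ℂ) - 1 = ((2 * α - 1 : ℝ) : ℂ) by push_cast; ring, norm_real,
      Real.norm_eq_abs, abs_le]
    constructor <;> linarith [hα.1, hα.2]
  have hg := analyticAt_tangentDiskMap hden
  have hg' : deriv (tangentDiskMap α) τ ≠ 0 := by
    rw [deriv_tangentDiskMap hden]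
    exact div_ne_zero (mul_ne_zero two_ne_zero (by exact_mod_cast (sub_neg.2 hα.2).ne))
      (pow_ne_zero 2 hden)
  refine ⟨?_, deriv_comp_diskInvolution_zero hg,
    iteratedDeriv_two_div_deriv_comp_diskInvolution_zero hg hg' hτ.ne⟩
  rw [deriv_comp_diskInvolution_zero hg, re_sub_mul_norm_sq_tangentDiskMap hden,
    deriv_tangentDiskMap hden, norm_mul, norm_neg, norm_div, norm_pow,
    show 2 * ((α : ℂ) - 1) = ((2 * (α - 1) : ℝ) : ℂ) by push_cast; ring,
    show 1 - (‖τ‖ : ℂ) ^ 2 = ((1 - ‖τ‖ ^ 2 : ℝ) : ℂ) by push_cast; ring,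
    norm_real, norm_real, Real.norm_of_nonpos (by linarith [hα.2]),
    Real.norm_of_nonneg (by nlinarith [norm_nonneg τ])]
  ring
end
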